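/- arXiv:2003.10888 — 6 statements merged into one kernel-verified Lean document; each statement's English description precedes it below -/
import Mathlib

section
/- Let X ⊆ ℝⁿ be nonempty, closed, and convex, let B : ℝⁿ → ℝⁿ be μ-strongly monotone and L-Lipschitz with 0 < μ and L > 0, let γ > 0, and let x* ∈ ℝⁿ satisfy x* = Π_X(x* − γ B(x*)). Let (Ω, P) be a probability space, let y ∈ ℝⁿ, and let G : Ω → ℝⁿ be Bochner integrable with ∫ G dP = B(y) and with ω ↦ ‖G(ω)‖₂² integrable. Then ∫ ‖Π_X(y − γ G(ω)) − x*‖₂² dP(ω) ≤ (1 − 2γμ + γ²L²)‖y − x*‖₂² + γ² ∫ ‖G(ω) − B(y)‖₂² dP(ω). -/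
set_option maxHeartbeats 1000000

open MeasureTheory
open scoped RealInnerProductSpace

theorem stmt_6 {n : ℕ}
    (X : Set (EuclideanSpace ℝ (Fin n)))
    (hXne : X.Nonempty) (hXcl : IsClosed X) (hXcv : Convex ℝ X)
    (B : EuclideanSpace ℝ (Fin n) → EuclideanSpace ℝ (Fin n))
    (μ L : ℝ) (hμ : 0 < μ) (hL : 0 < L)
    (hmono : ∀ x y, μ * ‖x - y‖ ^ 2 ≤ ⟪B x - B y, x - y⟫)
    (hlip : ∀ x y, ‖B x - B y‖ ≤ L * ‖x - y‖)
    (proj : EuclideanSpace ℝ (Fin n) → EuclideanSpace ℝ (Fin n))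
    (hproj_mem : ∀ z, proj z ∈ X)
    (hproj_near : ∀ z, ∀ w ∈ X, dist z (proj z) ≤ dist z w)
    (γ : ℝ) (hγ : 0 < γ)
    (xstar : EuclideanSpace ℝ (Fin n)) (hfix : xstar = proj (xstar - γ • B xstar))
    {Ω : Type*} [MeasurableSpace Ω] (P : Measure Ω) [IsProbabilityMeasure P]
    (y : EuclideanSpace ℝ (Fin n)) (G : Ω → EuclideanSpace ℝ (Fin n))
    (hGint : Integrable G P) (hGmean : ∫ ω, G ω ∂P = B y)
    (hG2 : Integrable (fun ω => ‖G ω‖ ^ 2) P) :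
    ∫ ω, ‖proj (y - γ • G ω) - xstar‖ ^ 2 ∂P
      ≤ (1 - 2 * γ * μ + γ ^ 2 * L ^ 2) * ‖y - xstar‖ ^ 2
        + γ ^ 2 * ∫ ω, ‖G ω - B y‖ ^ 2 ∂P := by
  -- variational inequality
  have hvar : ∀ z, ∀ w ∈ X, ⟪z - proj z, w - proj z⟫ ≤ 0 := by
    intro z w hw
    have hne : Nonempty X := ⟨⟨proj z, hproj_mem z⟩⟩
    have heq : ‖z - proj z‖ = ⨅ w : X, ‖z - w‖ := by
      apply le_antisymm
      · apply le_ciInf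
        intro w'
        have := hproj_near z w' w'.2
        simpa [dist_eq_norm] using this
      · have hbdd : BddBelow (Set.range fun w : X => ‖z - ↑w‖) := by
          refine ⟨0, ?_⟩
          rintro _ ⟨w, rfl⟩
          positivity
        exact ciInf_le hbdd ⟨proj z, hproj_mem z⟩
    exact (norm_eq_iInf_iff_real_inner_le_zero hXcv (hproj_mem z)).1 heq w hw
  -- nonexpansiveness
  have hnonexp : ∀ z₁ z₂, ‖proj z₁ - proj z₂‖ ≤ ‖z₁ - z₂‖ := by
    intro z₁ z₂
    have h1 := hvar z₁ (proj z₂) (hproj_mem z₂)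
    have h2 := hvar z₂ (proj z₁) (hproj_mem z₁)
    have key : ‖proj z₁ - proj z₂‖ ^ 2 ≤ ⟪z₁ - z₂, proj z₁ - proj z₂⟫ := by
      have e1 : ⟪z₁ - z₂, proj z₁ - proj z₂⟫
          = ⟪proj z₁ - proj z₂, proj z₁ - proj z₂⟫
            - ⟪z₁ - proj z₁, proj z₂ - proj z₁⟫ - ⟪z₂ - proj z₂, proj z₁ - proj z₂⟫ := by
        simp only [inner_sub_left, inner_sub_right]
        ring
      rw [e1, real_inner_self_eq_norm_sq]
      linarith
    have := real_inner_le_norm (z₁ - z₂) (proj z₁ - proj z₂)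
    nlinarith [norm_nonneg (proj z₁ - proj z₂), norm_nonneg (z₁ - z₂)]
  set d := y - xstar with hd
  set e := B y - B xstar with he
  set a := d - γ • e with ha
  set Z := fun ω => G ω - B y with hZ
  -- pointwise bound
  have hpt : ∀ ω, ‖proj (y - γ • G ω) - xstar‖ ^ 2 ≤ ‖a - γ • Z ω‖ ^ 2 := by
    intro ω
    have h1 : ‖proj (y - γ • G ω) - xstar‖ ≤ ‖a - γ • Z ω‖ := by
      calc ‖proj (y - γ • G ω) - xstar‖
          = ‖proj (y - γ • G ω) - proj (xstar - γ • B xstar)‖ := by rw [← hfix]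
        _ ≤ ‖(y - γ • G ω) - (xstar - γ • B xstar)‖ := hnonexp _ _
        _ = ‖a - γ • Z ω‖ := by
            congr 1
            simp only [ha, hd, he, hZ, smul_sub]
            abel
    nlinarith [norm_nonneg (proj (y - γ • G ω) - xstar)]
  -- expansion of the square
  have hexp : ∀ ω, ‖a - γ • Z ω‖ ^ 2
      = ‖a‖ ^ 2 - 2 * γ * ⟪a, Z ω⟫ + γ ^ 2 * ‖Z ω‖ ^ 2 := by
    intro ω
    rw [norm_sub_sq_real, real_inner_smul_right, norm_smul, Real.norm_eq_abs, abs_of_pos hγ]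
    try ring
  -- integrability
  have hZint : Integrable Z P := hGint.sub (integrable_const _)
  have hinner : Integrable (fun ω => ⟪a, Z ω⟫) P := hZint.const_inner a
  have hinnerG : Integrable (fun ω => ⟪B y, G ω⟫) P := hGint.const_inner (B y)
  have hZ2 : Integrable (fun ω => ‖Z ω‖ ^ 2) P := by
    have : ∀ ω, ‖Z ω‖ ^ 2 = ‖G ω‖ ^ 2 - 2 * ⟪B y, G ω⟫ + ‖B y‖ ^ 2 := by
      intro ω
      rw [hZ]
      rw [norm_sub_sq_real, real_inner_comm]
      try ring
    simp only [this]
    exact ((hG2.sub (hinnerG.const_mul 2)).add (integrable_const _))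
  have hbint : Integrable (fun ω => ‖a - γ • Z ω‖ ^ 2) P := by
    simp only [hexp]
    exact ((integrable_const _).sub (hinner.const_mul (2 * γ))).add (hZ2.const_mul (γ ^ 2))
  have hLint : Integrable (fun ω => ‖proj (y - γ • G ω) - xstar‖ ^ 2) P := by
    apply hbint.mono'
    · apply AEStronglyMeasurable.pow
      apply Continuous.comp_aestronglyMeasurable (g := fun v => ‖proj (y - γ • v) - xstar‖)
        ?_ hGint.aestronglyMeasurable
      have hc : Continuous proj := by
        refine (LipschitzWith.of_dist_le_mul (K := 1) fun z₁ z₂ => ?_).continuous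
        simpa [dist_eq_norm] using hnonexp z₁ z₂
      fun_prop
    · filter_upwards with ω
      rw [Real.norm_of_nonneg (by positivity)]
      exact hpt ω
  -- mean of Z is zero
  have hZmean : ∫ ω, Z ω ∂P = 0 := by
    rw [hZ]
    rw [integral_sub hGint (integrable_const _), hGmean, integral_const]
    simp
  have hinnermean : ∫ ω, ⟪a, Z ω⟫ ∂P = 0 := by
    rw [integral_inner hZint a, hZmean, inner_zero_right]
  -- integral computation
  have hi1 : Integrable (fun ω => ‖a‖ ^ 2 - 2 * γ * ⟪a, Z ω⟫) P :=
    (integrable_const _).sub (hinner.const_mul _)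
  have hi2 : Integrable (fun ω => γ ^ 2 * ‖Z ω‖ ^ 2) P := hZ2.const_mul _
  have hint : ∫ ω, ‖a - γ • Z ω‖ ^ 2 ∂P = ‖a‖ ^ 2 + γ ^ 2 * ∫ ω, ‖Z ω‖ ^ 2 ∂P := by
    simp only [hexp]
    rw [integral_add hi1 hi2,
      integral_sub (integrable_const _) (hinner.const_mul (2 * γ)),
      integral_const, integral_const_mul, integral_const_mul, hinnermean]
    simp
  -- bound on ‖a‖²
  have hanorm : ‖a‖ ^ 2 ≤ (1 - 2 * γ * μ + γ ^ 2 * L ^ 2) * ‖d‖ ^ 2 := by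
    have h1 : μ * ‖d‖ ^ 2 ≤ ⟪e, d⟫ := hmono y xstar
    have h2 : ‖e‖ ≤ L * ‖d‖ := hlip y xstar
    have h3 : ‖a‖ ^ 2 = ‖d‖ ^ 2 - 2 * γ * ⟪d, e⟫ + γ ^ 2 * ‖e‖ ^ 2 := by
      rw [ha, norm_sub_sq_real, real_inner_smul_right, norm_smul, Real.norm_eq_abs,
        abs_of_pos hγ]
      ring
    have hc : ⟪d, e⟫ = ⟪e, d⟫ := real_inner_comm e d
    have h4 : ‖e‖ ^ 2 ≤ L ^ 2 * ‖d‖ ^ 2 := by nlinarith [norm_nonneg e, norm_nonneg d]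
    have h5 : γ ^ 2 * ‖e‖ ^ 2 ≤ γ ^ 2 * (L ^ 2 * ‖d‖ ^ 2) :=
      mul_le_mul_of_nonneg_left h4 (sq_nonneg γ)
    have h6 : 2 * γ * (μ * ‖d‖ ^ 2) ≤ 2 * γ * ⟪e, d⟫ :=
      mul_le_mul_of_nonneg_left h1 (by positivity)
    rw [h3]
    nlinarith []
  calc ∫ ω, ‖proj (y - γ • G ω) - xstar‖ ^ 2 ∂P
      ≤ ∫ ω, ‖a - γ • Z ω‖ ^ 2 ∂P := integral_mono hLint hbint hpt
    _ = ‖a‖ ^ 2 + γ ^ 2 * ∫ ω, ‖Z ω‖ ^ 2 ∂P := hint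
    _ ≤ (1 - 2 * γ * μ + γ ^ 2 * L ^ 2) * ‖y - xstar‖ ^ 2
        + γ ^ 2 * ∫ ω, ‖G ω - B y‖ ^ 2 ∂P := by
        rw [← hd]
        simp only [hZ]
        linarith
end

section
/- Let m ≥ 1, let p = (p_i) and q = (q_i) be probability vectors on {1,…,m} with strictly positive components, and set r := ∑_{i=1}^m p_i²/q_i. Let B_1,…,B_m : ℝⁿ → ℝⁿ each be L-Lipschitz, and define A_i := (p_i/q_i) B_i for each i. Let y, x* ∈ ℝⁿ and φ_1,…,φ_m ∈ ℝⁿ, and define G_i := A_i(y) − φ_i + ∑_{j=1}^m q_j φ_j for each i and B̄(y) := ∑_{i=1}^m p_i B_i(y). Then ∑_{i=1}^m q_i ‖G_i − B̄(y)‖₂² ≤ 2 ( r L² ‖y − x*‖₂² + ∑_{i=1}^m q_i ‖φ_i − A_i(x*)‖₂² ). -/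
/-!
Since `∑ⱼ qⱼ Aⱼ(y) = B̄(y)`, the vectors `Gᵢ - B̄(y)` are the `q`-centred versions of
`uᵢ = Aᵢ(y) - φᵢ`, so their `q`-weighted second moment is a variance and is at most
`∑ qᵢ ‖uᵢ‖²`. Splitting `uᵢ = (Aᵢ(y) - Aᵢ(x*)) + (Aᵢ(x*) - φᵢ)` and using
`‖a + b‖² ≤ 2‖a‖² + 2‖b‖²`, the first part contributes
`∑ qᵢ (pᵢ/qᵢ)² L² ‖y - x*‖² = r L² ‖y - x*‖²`.
-/

open Finset

section WeightedVariance

variable {ι E : Type*} [NormedAddCommGroup E] [InnerProductSpace ℝ E]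

theorem sum_mul_norm_sub_sum_smul_sq (s : Finset ι) (w : ι → ℝ) (hw : ∑ i ∈ s, w i = 1)
    (v : ι → E) :
    ∑ i ∈ s, w i * ‖v i - ∑ j ∈ s, w j • v j‖ ^ 2
      = ∑ i ∈ s, w i * ‖v i‖ ^ 2 - ‖∑ j ∈ s, w j • v j‖ ^ 2 := by
  set μ := ∑ j ∈ s, w j • v j
  have hμ : ∑ i ∈ s, w i * inner ℝ (v i) μ = ‖μ‖ ^ 2 := by
    simp only [← real_inner_self_eq_norm_sq, μ, sum_inner, real_inner_smul_left]
  calc ∑ i ∈ s, w i * ‖v i - μ‖ ^ 2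
      = ∑ i ∈ s, w i * ‖v i‖ ^ 2 - 2 * ∑ i ∈ s, w i * inner ℝ (v i) μ
          + (∑ i ∈ s, w i) * ‖μ‖ ^ 2 := by
        simp only [norm_sub_sq_real, mul_sum, sum_mul, ← sum_sub_distrib, ← sum_add_distrib]
        exact sum_congr rfl fun i _ => by ring
    _ = ∑ i ∈ s, w i * ‖v i‖ ^ 2 - ‖μ‖ ^ 2 := by rw [hμ, hw]; ring

theorem sum_mul_norm_sub_sum_smul_sq_le (s : Finset ι) (w : ι → ℝ) (hw : ∑ i ∈ s, w i = 1)
    (v : ι → E) :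
    ∑ i ∈ s, w i * ‖v i - ∑ j ∈ s, w j • v j‖ ^ 2 ≤ ∑ i ∈ s, w i * ‖v i‖ ^ 2 := by
  rw [sum_mul_norm_sub_sum_smul_sq s w hw]
  linarith [sq_nonneg ‖∑ j ∈ s, w j • v j‖]

end WeightedVariance

theorem norm_add_sq_le_two_mul {E : Type*} [SeminormedAddCommGroup E] (a b : E) :
    ‖a + b‖ ^ 2 ≤ 2 * (‖a‖ ^ 2 + ‖b‖ ^ 2) :=
  (pow_le_pow_left₀ (norm_nonneg _) (norm_add_le a b) 2).trans add_sq_le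

theorem mul_norm_div_smul_sub_sq_le {E F : Type*} [SeminormedAddCommGroup E]
    [SeminormedAddCommGroup F] [NormedSpace ℝ F] {f : E → F} {L : ℝ}
    (hf : ∀ x y, ‖f x - f y‖ ≤ L * ‖x - y‖) (a : ℝ) {b : ℝ} (hb : 0 < b) (x y : E) :
    b * ‖(a / b) • f x - (a / b) • f y‖ ^ 2 ≤ a ^ 2 / b * L ^ 2 * ‖x - y‖ ^ 2 := by
  have hfxy : ‖f x - f y‖ ^ 2 ≤ L ^ 2 * ‖x - y‖ ^ 2 := by
    rw [← mul_pow]; exact pow_le_pow_left₀ (norm_nonneg _) (hf x y) 2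
  calc b * ‖(a / b) • f x - (a / b) • f y‖ ^ 2 = a ^ 2 / b * ‖f x - f y‖ ^ 2 := by
        rw [← smul_sub, norm_smul, mul_pow, Real.norm_eq_abs, sq_abs]
        field_simp
    _ ≤ a ^ 2 / b * L ^ 2 * ‖x - y‖ ^ 2 := by
        rw [mul_assoc]; exact mul_le_mul_of_nonneg_left hfxy (by positivity)

theorem stmt_7_general {n m : ℕ}
    (p q : Fin m → ℝ)
    (hq : ∀ i, 0 < q i)
    (hqs : ∑ i, q i = 1)
    (r : ℝ) (hr : r = ∑ i, (p i) ^ 2 / q i)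
    (B : Fin m → EuclideanSpace ℝ (Fin n) → EuclideanSpace ℝ (Fin n))
    (L : ℝ)
    (hLip : ∀ i x y, ‖B i x - B i y‖ ≤ L * ‖x - y‖)
    (A : Fin m → EuclideanSpace ℝ (Fin n) → EuclideanSpace ℝ (Fin n))
    (hA : ∀ i x, A i x = (p i / q i) • B i x)
    (y xstar : EuclideanSpace ℝ (Fin n))
    (φ : Fin m → EuclideanSpace ℝ (Fin n))
    (G : Fin m → EuclideanSpace ℝ (Fin n))
    (hG : ∀ i, G i = A i y - φ i + ∑ j, q j • φ j)
    (Bbar : EuclideanSpace ℝ (Fin n)) (hB : Bbar = ∑ i, p i • B i y) :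
    ∑ i, q i * ‖G i - Bbar‖ ^ 2
      ≤ 2 * (r * L ^ 2 * ‖y - xstar‖ ^ 2 + ∑ i, q i * ‖φ i - A i xstar‖ ^ 2) := by
  have hBbar : Bbar = ∑ j, q j • A j y := by
    simp only [hB, hA, smul_smul, div_mul_cancel₀ _ (hq _).ne', mul_comm (q _)]
  have hG_centered : ∀ i, G i - Bbar = (A i y - φ i) - ∑ j, q j • (A j y - φ j) := by
    intro i
    simp only [hG, hBbar, smul_sub, sum_sub_distrib]
    abel
  calc ∑ i, q i * ‖G i - Bbar‖ ^ 2
      ≤ ∑ i, q i * ‖A i y - φ i‖ ^ 2 := by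
        simpa only [hG_centered] using sum_mul_norm_sub_sum_smul_sq_le _ q hqs _
    _ ≤ ∑ i, q i * (2 * (‖A i y - A i xstar‖ ^ 2 + ‖φ i - A i xstar‖ ^ 2)) := by
        refine sum_le_sum fun i _ => mul_le_mul_of_nonneg_left ?_ (hq i).le
        simpa only [sub_add_sub_cancel, norm_sub_rev (A i xstar)] using
          norm_add_sq_le_two_mul (A i y - A i xstar) (A i xstar - φ i)
    _ = 2 * (∑ i, q i * ‖A i y - A i xstar‖ ^ 2 + ∑ i, q i * ‖φ i - A i xstar‖ ^ 2) := by
        rw [← sum_add_distrib, mul_sum]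
        exact sum_congr rfl fun i _ => by ring
    _ ≤ 2 * (r * L ^ 2 * ‖y - xstar‖ ^ 2 + ∑ i, q i * ‖φ i - A i xstar‖ ^ 2) := by
        gcongr
        rw [hr, sum_mul, sum_mul]
        refine sum_le_sum fun i _ => ?_
        simpa only [hA] using mul_norm_div_smul_sub_sq_le (hLip i) (p i) (hq i) y xstar

theorem stmt_7 {n m : ℕ} (hm : 0 < m)
    (p q : Fin m → ℝ)
    (hp : ∀ i, 0 < p i) (hq : ∀ i, 0 < q i)
    (hps : ∑ i, p i = 1) (hqs : ∑ i, q i = 1)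
    (r : ℝ) (hr : r = ∑ i, (p i) ^ 2 / q i)
    (B : Fin m → EuclideanSpace ℝ (Fin n) → EuclideanSpace ℝ (Fin n))
    (L : ℝ)
    (hLip : ∀ i x y, ‖B i x - B i y‖ ≤ L * ‖x - y‖)
    (A : Fin m → EuclideanSpace ℝ (Fin n) → EuclideanSpace ℝ (Fin n))
    (hA : ∀ i x, A i x = (p i / q i) • B i x)
    (y xstar : EuclideanSpace ℝ (Fin n))
    (φ : Fin m → EuclideanSpace ℝ (Fin n))
    (G : Fin m → EuclideanSpace ℝ (Fin n))
    (hG : ∀ i, G i = A i y - φ i + ∑ j, q j • φ j)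
    (Bbar : EuclideanSpace ℝ (Fin n)) (hB : Bbar = ∑ i, p i • B i y) :
    ∑ i, q i * ‖G i - Bbar‖ ^ 2
      ≤ 2 * (r * L ^ 2 * ‖y - xstar‖ ^ 2 + ∑ i, q i * ‖φ i - A i xstar‖ ^ 2) :=
  stmt_7_general p q hq hqs r hr B L hLip A hA y xstar φ G hG Bbar hB
end

section
/- Let X ⊆ ℝⁿ be nonempty, closed, and convex, let p = (p_i) and q = (q_i) be probability vectors on {1,…,m} with strictly positive components, and set r := ∑_{i=1}^m p_i²/q_i. Let B_1,…,B_m : ℝⁿ → ℝⁿ each be L-Lipschitz, define A_i := (p_i/q_i) B_i, and suppose B := ∑_{i=1}^m p_i B_i is μ-strongly monotone with μ > 0. Let γ > 0 and let x* ∈ ℝⁿ satisfy x* = Π_X(x* − γ B(x*)). Let y ∈ ℝⁿ and φ_1,…,φ_m ∈ ℝⁿ, and define G_i := A_i(y) − φ_i + ∑_{j=1}^m q_j φ_j for each i. Then ∑_{i=1}^m q_i ‖Π_X(y − γ G_i) − x*‖₂² ≤ (1 − 2γμ + (1 + 2r)γ²L²)‖y − x*‖₂² + 2γ² ∑_{i=1}^m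 q_i ‖φ_i − A_i(x*)‖₂². -/
open scoped RealInnerProductSpace

section aux
variable {E : Type*} [NormedAddCommGroup E] [InnerProductSpace ℝ E]

lemma stmt8_proj_varineq {X : Set E} (hXcv : Convex ℝ X)
    (proj : E → E) (hmem : ∀ z, proj z ∈ X)
    (hnear : ∀ z, ∀ w ∈ X, dist z (proj z) ≤ dist z w) :
    ∀ z, ∀ w ∈ X, ⟪z - proj z, w - proj z⟫ ≤ 0 := by
  intro z
  haveI : Nonempty X := ⟨⟨proj z, hmem z⟩⟩
  have key : ‖z - proj z‖ = ⨅ w : X, ‖z - (w : E)‖ := by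
    apply le_antisymm
    · exact le_ciInf fun w => by simpa [dist_eq_norm] using hnear z w w.2
    · have hb : BddBelow (Set.range fun w : X => ‖z - (w : E)‖) := by
        refine ⟨0, ?_⟩
        rintro x ⟨w, rfl⟩
        exact norm_nonneg _
      exact ciInf_le hb ⟨proj z, hmem z⟩
  exact (norm_eq_iInf_iff_real_inner_le_zero hXcv (hmem z)).mp key

lemma stmt8_proj_nonexp {X : Set E} (hXcv : Convex ℝ X)
    (proj : E → E) (hmem : ∀ z, proj z ∈ X)
    (hnear : ∀ z, ∀ w ∈ X, dist z (proj z) ≤ dist z w) :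
    ∀ z1 z2, ‖proj z1 - proj z2‖ ≤ ‖z1 - z2‖ := by
  intro z1 z2
  have h1 := stmt8_proj_varineq hXcv proj hmem hnear z1 (proj z2) (hmem z2)
  have h2 := stmt8_proj_varineq hXcv proj hmem hnear z2 (proj z1) (hmem z1)
  have h3 : (0:ℝ) ≤ ⟪z1 - proj z1, proj z1 - proj z2⟫ := by
    have e : ⟪z1 - proj z1, proj z1 - proj z2⟫ = -⟪z1 - proj z1, proj z2 - proj z1⟫ := by
      rw [← inner_neg_right, neg_sub]
    rw [e]; linarith
  have key : ⟪proj z1 - proj z2, proj z1 - proj z2⟫ ≤ ⟪z1 - z2, proj z1 - proj z2⟫ := by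
    have expand : ⟪z1 - z2, proj z1 - proj z2⟫ - ⟪proj z1 - proj z2, proj z1 - proj z2⟫
        = ⟪z1 - proj z1, proj z1 - proj z2⟫ - ⟪z2 - proj z2, proj z1 - proj z2⟫ := by
      rw [← inner_sub_left, ← inner_sub_left]
      congr 1
      abel
    linarith
  have hnorm : ‖proj z1 - proj z2‖ ^ 2 ≤ ‖z1 - z2‖ * ‖proj z1 - proj z2‖ := by
    calc ‖proj z1 - proj z2‖ ^ 2 = ⟪proj z1 - proj z2, proj z1 - proj z2⟫ :=
          (real_inner_self_eq_norm_sq _).symm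
      _ ≤ ⟪z1 - z2, proj z1 - proj z2⟫ := key
      _ ≤ ‖z1 - z2‖ * ‖proj z1 - proj z2‖ := real_inner_le_norm _ _
  nlinarith [norm_nonneg (proj z1 - proj z2), norm_nonneg (z1 - z2)]

end aux

set_option maxHeartbeats 1000000 in
theorem stmt_8 {n m : ℕ} (hm : 0 < m)
    (X : Set (EuclideanSpace ℝ (Fin n)))
    (hXne : X.Nonempty) (hXcl : IsClosed X) (hXcv : Convex ℝ X)
    (p q : Fin m → ℝ)
    (hp : ∀ i, 0 < p i) (hq : ∀ i, 0 < q i)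
    (hps : ∑ i, p i = 1) (hqs : ∑ i, q i = 1)
    (r : ℝ) (hr : r = ∑ i, (p i) ^ 2 / q i)
    (B : Fin m → EuclideanSpace ℝ (Fin n) → EuclideanSpace ℝ (Fin n))
    (L : ℝ)
    (hLip : ∀ i x y, ‖B i x - B i y‖ ≤ L * ‖x - y‖)
    (A : Fin m → EuclideanSpace ℝ (Fin n) → EuclideanSpace ℝ (Fin n))
    (hA : ∀ i x, A i x = (p i / q i) • B i x)
    (Bbar : EuclideanSpace ℝ (Fin n) → EuclideanSpace ℝ (Fin n))
    (hBbar : ∀ x, Bbar x = ∑ i, p i • B i x)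
    (μ : ℝ) (hμ : 0 < μ)
    (hmono : ∀ x y, μ * ‖x - y‖ ^ 2 ≤ ⟪Bbar x - Bbar y, x - y⟫)
    (proj : EuclideanSpace ℝ (Fin n) → EuclideanSpace ℝ (Fin n))
    (hproj_mem : ∀ z, proj z ∈ X)
    (hproj_near : ∀ z, ∀ w ∈ X, dist z (proj z) ≤ dist z w)
    (γ : ℝ) (hγ : 0 < γ)
    (xstar : EuclideanSpace ℝ (Fin n))
    (hfix : xstar = proj (xstar - γ • Bbar xstar))
    (y : EuclideanSpace ℝ (Fin n))
    (φ : Fin m → EuclideanSpace ℝ (Fin n))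
    (G : Fin m → EuclideanSpace ℝ (Fin n))
    (hG : ∀ i, G i = A i y - φ i + ∑ j, q j • φ j) :
    ∑ i, q i * ‖proj (y - γ • G i) - xstar‖ ^ 2
      ≤ (1 - 2 * γ * μ + (1 + 2 * r) * γ ^ 2 * L ^ 2) * ‖y - xstar‖ ^ 2
        + 2 * γ ^ 2 * ∑ i, q i * ‖φ i - A i xstar‖ ^ 2 := by
  -- basic scalar identity: q i • A i x = p i • B i x
  have hqA : ∀ (i : Fin m) (x : EuclideanSpace ℝ (Fin n)), q i • A i x = p i • B i x := by
    intro i x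
    have hqne : q i ≠ 0 := (hq i).ne'
    rw [hA, smul_smul]
    congr 1
    field_simp
  have hBq : ∀ x : EuclideanSpace ℝ (Fin n), Bbar x = ∑ i, q i • A i x := by
    intro x
    rw [hBbar]
    exact Finset.sum_congr rfl fun i _ => (hqA i x).symm
  -- sum of q i • G i equals Bbar y
  have hsumG : ∑ i, q i • G i = Bbar y := by
    have hterm : ∀ i : Fin m,
        q i • G i = q i • A i y - q i • φ i + q i • (∑ j, q j • φ j) := fun i => by
      rw [hG i, smul_add, smul_sub]
    rw [Finset.sum_congr rfl fun i _ => hterm i, Finset.sum_add_distrib,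
      Finset.sum_sub_distrib, ← Finset.sum_smul, hqs, one_smul, ← hBq y]
    abel
  have hsumc : ∑ i, q i • (G i - Bbar xstar) = Bbar y - Bbar xstar := by
    simp only [smul_sub]
    rw [Finset.sum_sub_distrib, hsumG, ← Finset.sum_smul, hqs, one_smul]
  -- Step 1: nonexpansiveness bound
  have F1 : ∀ i : Fin m,
      ‖proj (y - γ • G i) - xstar‖ ^ 2 ≤ ‖(y - xstar) - γ • (G i - Bbar xstar)‖ ^ 2 := by
    intro i
    have h1 : ‖proj (y - γ • G i) - xstar‖ ≤ ‖(y - γ • G i) - (xstar - γ • Bbar xstar)‖ := by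
      conv_lhs => rw [hfix]
      exact stmt8_proj_nonexp hXcv proj hproj_mem hproj_near _ _
    have h2 : (y - γ • G i) - (xstar - γ • Bbar xstar)
        = (y - xstar) - γ • (G i - Bbar xstar) := by
      rw [smul_sub]
      abel
    rw [← h2]
    exact pow_le_pow_left₀ (norm_nonneg _) h1 2
  -- Step 2: expand the quadratic
  have F2 : ∑ i, q i * ‖(y - xstar) - γ • (G i - Bbar xstar)‖ ^ 2
      = ‖y - xstar‖ ^ 2 - 2 * γ * ⟪Bbar y - Bbar xstar, y - xstar⟫
        + γ ^ 2 * ∑ i, q i * ‖G i - Bbar xstar‖ ^ 2 := by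
    have hterm : ∀ i : Fin m, q i * ‖(y - xstar) - γ • (G i - Bbar xstar)‖ ^ 2
        = q i * ‖y - xstar‖ ^ 2 - 2 * γ * (q i * ⟪y - xstar, G i - Bbar xstar⟫)
          + γ ^ 2 * (q i * ‖G i - Bbar xstar‖ ^ 2) := by
      intro i
      rw [@norm_sub_sq_real, real_inner_smul_right, norm_smul, Real.norm_eq_abs,
        mul_pow, sq_abs]
      ring
    rw [Finset.sum_congr rfl fun i _ => hterm i, Finset.sum_add_distrib,
      Finset.sum_sub_distrib, ← Finset.sum_mul, ← Finset.mul_sum, ← Finset.mul_sum, hqs, one_mul]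
    have hip : ∑ i, q i * ⟪y - xstar, G i - Bbar xstar⟫ = ⟪Bbar y - Bbar xstar, y - xstar⟫ := by
      have h := (inner_sum (𝕜 := ℝ) Finset.univ (fun i => q i • (G i - Bbar xstar)) (y - xstar))
      have h2 : ∑ i, q i * ⟪y - xstar, G i - Bbar xstar⟫
          = ⟪y - xstar, ∑ i, q i • (G i - Bbar xstar)⟫ := by
        rw [inner_sum]
        exact Finset.sum_congr rfl fun i _ => (real_inner_smul_right _ _ _).symm
      rw [h2, hsumc, real_inner_comm]
    rw [hip]
  -- monotonicity
  have F3 : μ * ‖y - xstar‖ ^ 2 ≤ ⟪Bbar y - Bbar xstar, y - xstar⟫ := hmono y xstar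
  -- decomposition
  set ψbar : EuclideanSpace ℝ (Fin n) := ∑ j, q j • (φ j - A j xstar) with hψbardef
  have hci : ∀ i : Fin m, G i - Bbar xstar
      = (A i y - A i xstar) + (ψbar - (φ i - A i xstar)) := by
    intro i
    have hψbar' : ψbar = (∑ j, q j • φ j) - ∑ j, q j • A j xstar := by
      rw [hψbardef]
      simp only [smul_sub]
      rw [Finset.sum_sub_distrib]
    rw [hG i, hBq xstar, hψbar']
    abel
  have hnormc : ∀ i : Fin m, ‖G i - Bbar xstar‖ ^ 2
      ≤ 2 * ‖A i y - A i xstar‖ ^ 2 + 2 * ‖ψbar - (φ i - A i xstar)‖ ^ 2 := by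
    intro i
    rw [hci i]
    have h := norm_add_le (A i y - A i xstar) (ψbar - (φ i - A i xstar))
    nlinarith [norm_nonneg ((A i y - A i xstar) + (ψbar - (φ i - A i xstar))),
      norm_nonneg (A i y - A i xstar), norm_nonneg (ψbar - (φ i - A i xstar)),
      sq_nonneg (‖A i y - A i xstar‖ - ‖ψbar - (φ i - A i xstar)‖)]
  -- Lipschitz bound
  have hsa : ∑ i, q i * ‖A i y - A i xstar‖ ^ 2 ≤ r * L ^ 2 * ‖y - xstar‖ ^ 2 := by
    have ha : ∀ i : Fin m, q i * ‖A i y - A i xstar‖ ^ 2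
        ≤ (p i ^ 2 / q i) * (L ^ 2 * ‖y - xstar‖ ^ 2) := by
      intro i
      have hqne : q i ≠ 0 := (hq i).ne'
      have hpq : (0:ℝ) < p i / q i := div_pos (hp i) (hq i)
      have h1 : ‖A i y - A i xstar‖ = (p i / q i) * ‖B i y - B i xstar‖ := by
        rw [hA, hA, ← smul_sub, norm_smul, Real.norm_eq_abs, abs_of_pos hpq]
      have h2 : ‖A i y - A i xstar‖ ≤ (p i / q i) * (L * ‖y - xstar‖) := by
        rw [h1]
        exact mul_le_mul_of_nonneg_left (hLip i y xstar) hpq.le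
      have h3 : ‖A i y - A i xstar‖ ^ 2 ≤ ((p i / q i) * (L * ‖y - xstar‖)) ^ 2 :=
        pow_le_pow_left₀ (norm_nonneg _) h2 2
      have h4 : q i * (((p i / q i) * (L * ‖y - xstar‖)) ^ 2)
          = (p i ^ 2 / q i) * (L ^ 2 * ‖y - xstar‖ ^ 2) := by
        rw [mul_pow, div_pow, mul_pow]
        field_simp
      calc q i * ‖A i y - A i xstar‖ ^ 2
          ≤ q i * (((p i / q i) * (L * ‖y - xstar‖)) ^ 2) :=
            mul_le_mul_of_nonneg_left h3 (hq i).le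
        _ = (p i ^ 2 / q i) * (L ^ 2 * ‖y - xstar‖ ^ 2) := h4
    calc ∑ i, q i * ‖A i y - A i xstar‖ ^ 2
        ≤ ∑ i, (p i ^ 2 / q i) * (L ^ 2 * ‖y - xstar‖ ^ 2) :=
          Finset.sum_le_sum fun i _ => ha i
      _ = r * L ^ 2 * ‖y - xstar‖ ^ 2 := by rw [← Finset.sum_mul, ← hr]; ring
  -- variance bound
  have hψsum : ∑ i, q i * ‖ψbar - (φ i - A i xstar)‖ ^ 2
      ≤ ∑ i, q i * ‖φ i - A i xstar‖ ^ 2 := by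
    have hterm : ∀ i : Fin m, q i * ‖ψbar - (φ i - A i xstar)‖ ^ 2
        = q i * ‖ψbar‖ ^ 2 - 2 * (q i * ⟪ψbar, φ i - A i xstar⟫)
          + q i * ‖φ i - A i xstar‖ ^ 2 := by
      intro i
      rw [@norm_sub_sq_real]
      ring
    have hsum : ∑ i, q i * ⟪ψbar, φ i - A i xstar⟫ = ‖ψbar‖ ^ 2 := by
      have h2 : ∑ i, q i * ⟪ψbar, φ i - A i xstar⟫
          = ⟪ψbar, ∑ i, q i • (φ i - A i xstar)⟫ := by
        rw [inner_sum]
        exact Finset.sum_congr rfl fun i _ => (real_inner_smul_right _ _ _).symm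
      rw [h2, ← hψbardef, real_inner_self_eq_norm_sq]
    have heq : ∑ i, q i * ‖ψbar - (φ i - A i xstar)‖ ^ 2
        = ‖ψbar‖ ^ 2 - 2 * ‖ψbar‖ ^ 2 + ∑ i, q i * ‖φ i - A i xstar‖ ^ 2 := by
      rw [Finset.sum_congr rfl fun i _ => hterm i, Finset.sum_add_distrib,
        Finset.sum_sub_distrib, ← Finset.sum_mul, ← Finset.mul_sum, hqs, one_mul, hsum]
    rw [heq]
    nlinarith [sq_nonneg ‖ψbar‖]
  -- combined quadratic bound
  have F4 : ∑ i, q i * ‖G i - Bbar xstar‖ ^ 2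
      ≤ 2 * (r * L ^ 2 * ‖y - xstar‖ ^ 2) + 2 * ∑ i, q i * ‖φ i - A i xstar‖ ^ 2 := by
    calc ∑ i, q i * ‖G i - Bbar xstar‖ ^ 2
        ≤ ∑ i, q i * (2 * ‖A i y - A i xstar‖ ^ 2 + 2 * ‖ψbar - (φ i - A i xstar)‖ ^ 2) :=
          Finset.sum_le_sum fun i _ => mul_le_mul_of_nonneg_left (hnormc i) (hq i).le
      _ = 2 * ∑ i, q i * ‖A i y - A i xstar‖ ^ 2
            + 2 * ∑ i, q i * ‖ψbar - (φ i - A i xstar)‖ ^ 2 := by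
          rw [Finset.mul_sum, Finset.mul_sum, ← Finset.sum_add_distrib]
          exact Finset.sum_congr rfl fun i _ => by ring
      _ ≤ 2 * (r * L ^ 2 * ‖y - xstar‖ ^ 2) + 2 * ∑ i, q i * ‖φ i - A i xstar‖ ^ 2 := by
          linarith
  -- final combination
  have Fsum : ∑ i, q i * ‖proj (y - γ • G i) - xstar‖ ^ 2
      ≤ ∑ i, q i * ‖(y - xstar) - γ • (G i - Bbar xstar)‖ ^ 2 :=
    Finset.sum_le_sum fun i _ => mul_le_mul_of_nonneg_left (F1 i) (hq i).le
  have h3' : 2 * γ * (μ * ‖y - xstar‖ ^ 2) ≤ 2 * γ * ⟪Bbar y - Bbar xstar, y - xstar⟫ :=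
    mul_le_mul_of_nonneg_left F3 (by positivity)
  have h4' : γ ^ 2 * ∑ i, q i * ‖G i - Bbar xstar‖ ^ 2
      ≤ γ ^ 2 * (2 * (r * L ^ 2 * ‖y - xstar‖ ^ 2)
          + 2 * ∑ i, q i * ‖φ i - A i xstar‖ ^ 2) :=
    mul_le_mul_of_nonneg_left F4 (sq_nonneg γ)
  have h5' : (0:ℝ) ≤ γ ^ 2 * (L ^ 2 * ‖y - xstar‖ ^ 2) := by positivity
  nlinarith [Fsum, F2, h3', h4', h5']
end

section
/- Let c ≥ 2 and D ≥ 0 be real numbers, and let (e_t)_{t≥0} be a sequence of nonnegative real numbers satisfying e_{t+1} ≤ ((t + c − 2)/(t + c)) e_t + D/(t + c)² for all integers t ≥ 0. Then e_t ≤ ((c − 1) e_0 + D)/t for all integers t ≥ 1. -/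
theorem stmt_10 (c D : ℝ) (hc : 2 ≤ c) (hD : 0 ≤ D)
    (e : ℕ → ℝ) (he : ∀ t, 0 ≤ e t)
    (hrec : ∀ t : ℕ, e (t + 1) ≤ ((t + c - 2) / (t + c)) * e t + D / (t + c) ^ 2) :
    ∀ t : ℕ, 1 ≤ t → e t ≤ ((c - 1) * e 0 + D) / t := by
  have key : ∀ t : ℕ, ((t : ℝ) + c - 1) * ((t : ℝ) + c - 2) * e t ≤
      (c - 1) * (c - 2) * e 0 + (t : ℝ) * D := by
    intro t
    induction t with
    | zero => simp
    | succ n ih =>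
      have hn : (0 : ℝ) < (n : ℝ) + c := by
        have : (0 : ℝ) ≤ (n : ℝ) := Nat.cast_nonneg n
        linarith
      have h := hrec n
      have h2 : ((n : ℝ) + c) ^ 2 * e (n + 1) ≤
          ((n : ℝ) + c) * ((n : ℝ) + c - 2) * e n + D := by
        have hmul := mul_le_mul_of_nonneg_left h (le_of_lt (pow_pos hn 2))
        have heq : ((n : ℝ) + c) ^ 2 * ((((n : ℝ) + c - 2) / ((n : ℝ) + c)) * e n
            + D / ((n : ℝ) + c) ^ 2) = ((n : ℝ) + c) * ((n : ℝ) + c - 2) * e n + D := by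
          field_simp
        linarith [heq ▸ hmul]
      have hn1 : (0 : ℝ) ≤ (n : ℝ) + c - 1 := by
        have : (0 : ℝ) ≤ (n : ℝ) := Nat.cast_nonneg n
        linarith
      have h3 : ((n : ℝ) + c) * ((((n : ℝ) + 1) + c - 1) * (((n : ℝ) + 1) + c - 2) * e (n + 1))
          ≤ ((n : ℝ) + c) * ((c - 1) * (c - 2) * e 0 + ((n : ℝ) + 1) * D) := by
        nlinarith [mul_le_mul_of_nonneg_left h2 hn1, mul_le_mul_of_nonneg_left ih (le_of_lt hn),
          he n, he (n + 1), hD]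
      have := le_of_mul_le_mul_left h3 hn
      push_cast
      linarith [this]
  intro t ht
  have ht1 : (1 : ℝ) ≤ (t : ℝ) := by exact_mod_cast ht
  have ht0 : (0 : ℝ) < (t : ℝ) := by linarith
  rw [le_div_iff₀ ht0]
  have k := key t
  have hc1 : (0 : ℝ) ≤ c - 1 := by linarith
  have hc2 : (0 : ℝ) ≤ c - 2 := by linarith
  have hP : (0 : ℝ) < ((t : ℝ) + c - 1) * ((t : ℝ) + c - 2) := by nlinarith
  have step : (e t * (t : ℝ)) * (((t : ℝ) + c - 1) * ((t : ℝ) + c - 2)) ≤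
      ((c - 1) * e 0 + D) * (((t : ℝ) + c - 1) * ((t : ℝ) + c - 2)) := by
    have hk := mul_le_mul_of_nonneg_left k ht0.le
    nlinarith [mul_nonneg (mul_nonneg hc1 (he 0)) ht0.le,
      mul_nonneg (mul_nonneg hc1 (he 0)) hc2,
      mul_nonneg (mul_nonneg (mul_nonneg hc1 (he 0)) hc2) ht0.le,
      mul_nonneg hD ht0.le, mul_nonneg hD hc2, mul_nonneg (mul_nonneg hD hc2) ht0.le,
      mul_nonneg (mul_nonneg hc1 (he 0)) (mul_nonneg ht0.le ht0.le),
      mul_nonneg hc1 hc2, mul_nonneg (mul_nonneg hc1 hc2) (he 0),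
      mul_nonneg (mul_nonneg hc1 hc2) hD]
  exact le_of_mul_le_mul_right step hP
end

section
/- Let 0 < μ ≤ L, let r ≥ 1, let M ≥ 1 be an integer, and let γ be a real number with 0 < γ < 2μ/((1 + 2r + 2Mr)L²). Set ᾱ := 1 − 2γμ + (1 + 2r)γ²L² and α := 1 − 2γμ + (1 + 2r + 2Mr)γ²L². Then α ∈ (0,1); moreover, if (e_l)_{0≤l≤M} are nonnegative real numbers satisfying e_{l+1} ≤ ᾱ e_l + 2γ² r L² e_0 for all 0 ≤ l < M, then e_M ≤ α e_0. -/
theorem stmt_11 (μ L r γ : ℝ) (M : ℕ)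
    (hμ : 0 < μ) (hμL : μ ≤ L) (hr : 1 ≤ r) (hM : 1 ≤ M)
    (hγ0 : 0 < γ) (hγ : γ < 2 * μ / ((1 + 2 * r + 2 * M * r) * L ^ 2))
    (abar α : ℝ)
    (habar : abar = 1 - 2 * γ * μ + (1 + 2 * r) * γ ^ 2 * L ^ 2)
    (hα : α = 1 - 2 * γ * μ + (1 + 2 * r + 2 * M * r) * γ ^ 2 * L ^ 2) :
    α ∈ Set.Ioo (0 : ℝ) 1 ∧
      ∀ e : ℕ → ℝ, (∀ l, l ≤ M → 0 ≤ e l) →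
        (∀ l, l < M → e (l + 1) ≤ abar * e l + 2 * γ ^ 2 * r * L ^ 2 * e 0) →
        e M ≤ α * e 0 := by
  have hL : 0 < L := lt_of_lt_of_le hμ hμL
  have hMr : (1:ℝ) ≤ (M:ℝ) := by exact_mod_cast hM
  have hc : (5:ℝ) ≤ 1 + 2 * r + 2 * M * r := by nlinarith
  have hcL : 0 < (1 + 2 * r + 2 * M * r) * L ^ 2 := by positivity
  have hγc : γ * ((1 + 2 * r + 2 * M * r) * L ^ 2) < 2 * μ := by
    have := (lt_div_iff₀ hcL).mp hγ
    linarith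
  have hα1 : α < 1 := by nlinarith
  have hα0 : 0 < α := by nlinarith [sq_nonneg ((1 + 2 * r + 2 * M * r) * L ^ 2 * γ - μ), sq_nonneg L, sq_nonneg γ]
  have hμ2 : μ ^ 2 ≤ L ^ 2 := by nlinarith
  have hApos : 0 < (1 + 2 * r) * L ^ 2 := by positivity
  have hA : μ ^ 2 < (1 + 2 * r) * L ^ 2 := by nlinarith [sq_nonneg L]
  have habar0 : 0 ≤ abar := by
    nlinarith [sq_nonneg ((1 + 2 * r) * L ^ 2 * γ - μ), hApos, hA]
  have hbar1' : γ * ((1 + 2 * r) * L ^ 2) < 2 * μ := by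
    nlinarith [mul_nonneg (mul_nonneg (mul_nonneg hγ0.le (by positivity : (0:ℝ) ≤ 2 * (M:ℝ))) (by linarith : (0:ℝ) ≤ r)) (sq_nonneg L)]
  have habar1 : abar < 1 := by
    nlinarith [mul_pos hγ0 (by linarith : 0 < 2 * μ - γ * ((1 + 2 * r) * L ^ 2))]
  refine ⟨⟨hα0, hα1⟩, ?_⟩
  intro e he hrec
  have key : ∀ l, l ≤ M → e l ≤ (abar ^ l + l * (2 * γ ^ 2 * r * L ^ 2)) * e 0 := by
    intro l hl
    induction l with
    | zero => simp
    | succ n ih =>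
      have hn : n ≤ M := Nat.le_of_succ_le hl
      have ihn := ih hn
      have h1 := hrec n (Nat.lt_of_succ_le hl)
      have he0 := he 0 (Nat.zero_le M)
      have hen := he n hn
      have h2 : abar * e n ≤ abar * ((abar ^ n + n * (2 * γ ^ 2 * r * L ^ 2)) * e 0) :=
        mul_le_mul_of_nonneg_left ihn habar0
      have h3 : abar ^ n * abar ≤ 1 := by
        calc abar ^ n * abar = abar ^ (n+1) := by ring
        _ ≤ 1 ^ (n+1) := pow_le_pow_left₀ habar0 (le_of_lt habar1) _
        _ = 1 := one_pow _
      have hK : (0:ℝ) ≤ 2 * γ ^ 2 * r * L ^ 2 := by positivity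
      have hprod : 0 ≤ (1 - abar) * ((n:ℝ) * (2 * γ ^ 2 * r * L ^ 2) * e 0) :=
        mul_nonneg (by linarith) (mul_nonneg (mul_nonneg (Nat.cast_nonneg n) hK) he0)
      push_cast
      calc e (n + 1) ≤ abar * e n + 2 * γ ^ 2 * r * L ^ 2 * e 0 := h1
        _ ≤ abar * ((abar ^ n + (n:ℝ) * (2 * γ ^ 2 * r * L ^ 2)) * e 0)
              + 2 * γ ^ 2 * r * L ^ 2 * e 0 := by linarith
        _ = (abar ^ (n + 1) + ((n:ℝ) + 1) * (2 * γ ^ 2 * r * L ^ 2)) * e 0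
              - (1 - abar) * ((n:ℝ) * (2 * γ ^ 2 * r * L ^ 2) * e 0) := by ring
        _ ≤ (abar ^ (n + 1) + ((n:ℝ) + 1) * (2 * γ ^ 2 * r * L ^ 2)) * e 0 := by linarith
  have hM' := key M le_rfl
  have he0 := he 0 (Nat.zero_le M)
  have hpow : abar ^ M ≤ abar := by
    calc abar ^ M ≤ abar ^ 1 := pow_le_pow_of_le_one habar0 (le_of_lt habar1) hM
    _ = abar := pow_one _
  have hsum : abar + M * (2 * γ ^ 2 * r * L ^ 2) = α := by
    rw [habar, hα]; ring
  calc e M ≤ (abar ^ M + M * (2 * γ ^ 2 * r * L ^ 2)) * e 0 := hM'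
    _ ≤ (abar + M * (2 * γ ^ 2 * r * L ^ 2)) * e 0 := by
        apply mul_le_mul_of_nonneg_right _ he0; linarith
    _ = α * e 0 := by rw [hsum]
end

section
/- Let X ⊆ ℝⁿ be nonempty, closed, and convex, let p = (p_i) and q = (q_i) be probability vectors on {1,…,m} with strictly positive components, and set r := ∑_{i=1}^m p_i²/q_i. Let B_1,…,B_m : ℝⁿ → ℝⁿ each be L-Lipschitz, define A_i := (p_i/q_i) B_i, and suppose B := ∑_{i=1}^m p_i B_i is μ-strongly monotone with 0 < μ ≤ L. Let x* ∈ ℝⁿ satisfy x* = Π_X(x* − γ B(x*)), where M ≥ 1 is an integer and 0 < γ < 2μ/((1 + 2r + 2Mr)L²). Let I_0,…,I_{M−1} be i.i.d. {1,…,m}-valued random variables with P(I_l = i) = q_i. Fix y_0 ∈ X and define the SVRG inner iterates of one epoch by ỹ_0 := y_0 and ỹ_{l+1} := Π_X( ỹ_l − γ( A_{I_l}(ỹ_l) − A_{I_l}(y_0) + B(y_0) ) ) for 0 ≤ l < M. Then E[‖ỹ_M − x*‖₂²] ≤ (1 − 2γμ + (1 + 2r + 2Mr)γ²L²) ‖y_0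 − x*‖₂². -/
/-!
Nonexpansiveness of `Π_X` and the fixed-point equation bound `‖ỹ_{l+1} - x*‖` by `‖e - γ v‖`,
where `e = ỹ_l - x*` and `v` is an unbiased estimator of `B ỹ_l - B x*`. The second moment of `v`
is `‖B ỹ_l - B x*‖² ≤ L² ‖e‖²` plus a variance, which the importance weights bound by
`r L² ‖ỹ_l - y₀‖² ≤ 2 r L² (‖e‖² + ‖y₀ - x*‖²)`. Hence one inner step satisfies
`E ‖ỹ_{l+1} - x*‖² ≤ c ‖ỹ_l - x*‖² + K` with `c = 1 - 2γμ + (1 + 2r) γ² L² ∈ [0, 1]` and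
`K = 2 r γ² L² ‖y₀ - x*‖²`. Since the indices are i.i.d. and finitely valued, the expectation is a
weighted sum over index tuples, and iterating gives `c^M ‖y₀ - x*‖² + M K ≤ c ‖y₀ - x*‖² + M K`.
-/

open MeasureTheory ProbabilityTheory
open scoped RealInnerProductSpace ENNReal

section Projection

variable {E : Type*} [NormedAddCommGroup E] [InnerProductSpace ℝ E] {X : Set E} {proj : E → E}

lemma inner_sub_proj_le_zero (hX : Convex ℝ X) (hmem : ∀ z, proj z ∈ X)
    (hnear : ∀ z, ∀ w ∈ X, dist z (proj z) ≤ dist z w) (z : E) {w : E} (hw : w ∈ X) :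
    ⟪z - proj z, w - proj z⟫ ≤ 0 := by
  have : Nonempty X := ⟨⟨w, hw⟩⟩
  refine (norm_eq_iInf_iff_real_inner_le_zero hX (hmem z)).1 (le_antisymm ?_ ?_) w hw
  · exact le_ciInf fun w => by simpa [dist_eq_norm] using hnear z w w.2
  · exact ciInf_le ⟨0, Set.forall_mem_range.2 fun _ => norm_nonneg _⟩ (⟨proj z, hmem z⟩ : X)

lemma norm_proj_sub_proj_le (hX : Convex ℝ X) (hmem : ∀ z, proj z ∈ X)
    (hnear : ∀ z, ∀ w ∈ X, dist z (proj z) ≤ dist z w) (u v : E) :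
    ‖proj u - proj v‖ ≤ ‖u - v‖ := by
  have hu := inner_sub_proj_le_zero hX hmem hnear u (hmem v)
  have hv := inner_sub_proj_le_zero hX hmem hnear v (hmem u)
  have key : ‖proj u - proj v‖ ^ 2 ≤ ⟪u - v, proj u - proj v⟫ := by
    have : ⟪u - v, proj u - proj v⟫ - ‖proj u - proj v‖ ^ 2
        = -⟪u - proj u, proj v - proj u⟫ - ⟪v - proj v, proj u - proj v⟫ := by
      rw [← real_inner_self_eq_norm_sq, ← inner_sub_left, ← inner_neg_right, neg_sub,
        ← inner_sub_left]
      congr 1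
      abel
    linarith
  have := key.trans (real_inner_le_norm _ _)
  nlinarith [norm_nonneg (proj u - proj v), norm_nonneg (u - v)]

end Projection

section WeightedSums

variable {ι E : Type*} [Fintype ι] [NormedAddCommGroup E] [InnerProductSpace ℝ E] {q : ι → ℝ}

lemma sum_mul_inner (q : ι → ℝ) (v : ι → E) (e : E) :
    ∑ i, q i * ⟪v i, e⟫ = ⟪∑ i, q i • v i, e⟫ := by
  simp only [sum_inner, real_inner_smul_left]

lemma sum_mul_norm_sub_smul_sq (hq : ∑ i, q i = 1) (e : E) (γ : ℝ) (v : ι → E) :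
    ∑ i, q i * ‖e - γ • v i‖ ^ 2
      = ‖e‖ ^ 2 - 2 * γ * ⟪∑ i, q i • v i, e⟫ + γ ^ 2 * ∑ i, q i * ‖v i‖ ^ 2 := by
  have h : ∀ i, q i * ‖e - γ • v i‖ ^ 2
      = q i * ‖e‖ ^ 2 - 2 * γ * (q i * ⟪v i, e⟫) + γ ^ 2 * (q i * ‖v i‖ ^ 2) := by
    intro i
    rw [norm_sub_sq_real, real_inner_smul_right, norm_smul, Real.norm_eq_abs, mul_pow, sq_abs,
      real_inner_comm]
    ring
  simp only [h, Finset.sum_add_distrib, Finset.sum_sub_distrib, ← Finset.mul_sum,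
    ← Finset.sum_mul, hq, sum_mul_inner]
  ring

lemma sum_mul_norm_add_sq_le (hq : ∑ i, q i = 1) (u : ι → E) (d : E) :
    ∑ i, q i * ‖u i + d‖ ^ 2 ≤ ∑ i, q i * ‖u i‖ ^ 2 + ‖∑ i, q i • u i + d‖ ^ 2 := by
  have h : ∀ i, q i * ‖u i + d‖ ^ 2
      = q i * ‖u i‖ ^ 2 + 2 * (q i * ⟪u i, d⟫) + q i * ‖d‖ ^ 2 := by
    intro i
    rw [norm_add_sq_real]
    ring
  simp only [h, Finset.sum_add_distrib, ← Finset.mul_sum, ← Finset.sum_mul, hq, sum_mul_inner,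
    norm_add_sq_real (∑ i, q i • u i)]
  nlinarith [sq_nonneg ‖∑ i, q i • u i‖]

lemma sum_smul_div_smul (hq : ∀ i, q i ≠ 0) (p : ι → ℝ) (b : ι → E) :
    ∑ i, q i • (p i / q i) • b i = ∑ i, p i • b i := by
  simp only [smul_smul, mul_div_cancel₀ _ (hq _)]

lemma sum_mul_norm_div_smul_sq_le (hq : ∀ i, 0 ≤ q i) (p : ι → ℝ) {b : ι → E} {c : ℝ}
    (hb : ∀ i, ‖b i‖ ≤ c) :
    ∑ i, q i * ‖(p i / q i) • b i‖ ^ 2 ≤ (∑ i, p i ^ 2 / q i) * c ^ 2 := by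
  rw [Finset.sum_mul]
  refine Finset.sum_le_sum fun i _ => ?_
  have hq' : q i * (p i / q i) ^ 2 = p i ^ 2 / q i := by
    rcases (hq i).eq_or_lt with h | h
    · simp [← h] -- both sides are junk `0` here, as `x / 0 = 0`
    · field_simp
  rw [norm_smul, mul_pow, Real.norm_eq_abs, sq_abs, ← mul_assoc, hq']
  exact mul_le_mul_of_nonneg_left (pow_le_pow_left₀ (norm_nonneg _) (hb i) 2)
    (div_nonneg (sq_nonneg _) (hq i))

lemma norm_sum_smul_le_of_norm_le {p : ι → ℝ} (hp : ∀ i, 0 ≤ p i) (hps : ∑ i, p i = 1)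
    {b : ι → E} {c : ℝ} (hb : ∀ i, ‖b i‖ ≤ c) : ‖∑ i, p i • b i‖ ≤ c := by
  simpa using (convex_closedBall (0 : E) c).sum_mem (fun i _ => hp i) hps
    (fun i _ => by simpa using hb i)

end WeightedSums

section SVRGStep

variable {ι E : Type*} [Fintype ι] [NormedAddCommGroup E] [InnerProductSpace ℝ E] {q : ι → ℝ}

theorem svrg_step_bound {proj : E → E} (hproj : ∀ u v, ‖proj u - proj v‖ ≤ ‖u - v‖)
    (hq0 : ∀ i, 0 ≤ q i) (hq1 : ∑ i, q i = 1) {G : ι → E → E} {Bbar : E → E}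
    (hG : ∀ x, ∑ i, q i • G i x = Bbar x) {L μ ρ γ : ℝ}
    (hLip : ∀ x y, ‖Bbar x - Bbar y‖ ≤ L * ‖x - y‖)
    (hmono : ∀ x y, μ * ‖x - y‖ ^ 2 ≤ ⟪Bbar x - Bbar y, x - y⟫)
    (hvar : ∀ x y, ∑ i, q i * ‖G i x - G i y‖ ^ 2 ≤ ρ * ‖x - y‖ ^ 2) (hγ : 0 ≤ γ)
    {xstar : E} (hfix : xstar = proj (xstar - γ • Bbar xstar)) (y y0 : E) :
    ∑ i, q i * ‖proj (y - γ • (G i y - G i y0 + Bbar y0)) - xstar‖ ^ 2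
      ≤ (1 - 2 * γ * μ + γ ^ 2 * L ^ 2) * ‖y - xstar‖ ^ 2 + γ ^ 2 * ρ * ‖y - y0‖ ^ 2 := by
  set e := y - xstar
  set u := fun i => G i y - G i y0
  set d := Bbar y0 - Bbar xstar
  have hmean : ∑ i, q i • u i + d = Bbar y - Bbar xstar := by
    simp only [u, d, smul_sub, Finset.sum_sub_distrib, hG]
    abel
  have hmean' : ∑ i, q i • (u i + d) = Bbar y - Bbar xstar := by
    rw [← hmean]
    simp only [smul_add, Finset.sum_add_distrib, ← Finset.sum_smul, hq1, one_smul]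
  have hnonexp : ∀ i,
      ‖proj (y - γ • (G i y - G i y0 + Bbar y0)) - xstar‖ ≤ ‖e - γ • (u i + d)‖ := by
    intro i
    conv_lhs => rw [hfix]
    refine (hproj _ _).trans_eq (congrArg norm ?_)
    simp only [e, u, d, smul_add, smul_sub]
    abel
  have hsecond : ∑ i, q i * ‖u i + d‖ ^ 2 ≤ ρ * ‖y - y0‖ ^ 2 + L ^ 2 * ‖e‖ ^ 2 := by
    refine (sum_mul_norm_add_sq_le hq1 u d).trans (add_le_add (hvar y y0) ?_)
    rw [hmean, ← mul_pow]
    exact pow_le_pow_left₀ (norm_nonneg _) (hLip y xstar) 2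
  calc ∑ i, q i * ‖proj (y - γ • (G i y - G i y0 + Bbar y0)) - xstar‖ ^ 2
      ≤ ∑ i, q i * ‖e - γ • (u i + d)‖ ^ 2 := by
        gcongr with i
        · exact hq0 i
        · exact hnonexp i
    _ = ‖e‖ ^ 2 - 2 * γ * ⟪Bbar y - Bbar xstar, e⟫ + γ ^ 2 * ∑ i, q i * ‖u i + d‖ ^ 2 := by
        rw [sum_mul_norm_sub_smul_sq hq1, hmean']
    _ ≤ ‖e‖ ^ 2 - 2 * γ * (μ * ‖e‖ ^ 2) + γ ^ 2 * (ρ * ‖y - y0‖ ^ 2 + L ^ 2 * ‖e‖ ^ 2) := by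
        gcongr
        exact hmono y xstar
    _ = _ := by ring

theorem svrg_importance_step_bound {proj : E → E} (hproj : ∀ u v, ‖proj u - proj v‖ ≤ ‖u - v‖)
    {p : ι → ℝ} (hp : ∀ i, 0 ≤ p i) (hq : ∀ i, 0 < q i) (hps : ∑ i, p i = 1)
    (hqs : ∑ i, q i = 1) {B A : ι → E → E} {Bbar : E → E} {L μ γ : ℝ}
    (hLip : ∀ i x y, ‖B i x - B i y‖ ≤ L * ‖x - y‖) (hA : ∀ i x, A i x = (p i / q i) • B i x)
    (hBbar : ∀ x, Bbar x = ∑ i, p i • B i x)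
    (hmono : ∀ x y, μ * ‖x - y‖ ^ 2 ≤ ⟪Bbar x - Bbar y, x - y⟫) (hγ : 0 ≤ γ)
    {xstar : E} (hfix : xstar = proj (xstar - γ • Bbar xstar)) (y y0 : E) :
    ∑ i, q i * ‖proj (y - γ • (A i y - A i y0 + Bbar y0)) - xstar‖ ^ 2
      ≤ (1 - 2 * γ * μ + (1 + 2 * ∑ i, p i ^ 2 / q i) * γ ^ 2 * L ^ 2) * ‖y - xstar‖ ^ 2
        + 2 * (∑ i, p i ^ 2 / q i) * γ ^ 2 * L ^ 2 * ‖y0 - xstar‖ ^ 2 := by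
  set r := ∑ i, p i ^ 2 / q i
  have hr : 0 ≤ r := Finset.sum_nonneg fun i _ => div_nonneg (sq_nonneg _) (hq i).le
  have hbound := svrg_step_bound hproj (fun i => (hq i).le) hqs (G := A) (L := L)
    (ρ := r * L ^ 2)
    (fun x => by simp only [hA, hBbar, sum_smul_div_smul fun i => (hq i).ne'])
    (fun x y => by
      simpa only [hBbar, ← Finset.sum_sub_distrib, ← smul_sub] using
        norm_sum_smul_le_of_norm_le hp hps fun i => hLip i x y)
    hmono
    (fun x y => by
      simpa only [hA, ← smul_sub, mul_pow, mul_assoc] using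
        sum_mul_norm_div_smul_sq_le (fun i => (hq i).le) p fun i => hLip i x y)
    hγ hfix y y0
  have htri : ‖y - y0‖ ^ 2 ≤ 2 * (‖y - xstar‖ ^ 2 + ‖y0 - xstar‖ ^ 2) := by
    refine (pow_le_pow_left₀ (norm_nonneg _)
      (norm_sub_le_norm_sub_add_norm_sub y xstar y0) 2).trans ?_
    rw [norm_sub_rev xstar]
    exact add_sq_le
  have : 0 ≤ γ ^ 2 * (r * L ^ 2) := by positivity
  nlinarith

end SVRGStep

section Iteration

variable {α β : Type*} {q : β → ℝ}

lemma sum_prod_eq_one [Fintype β] (hq : ∑ i, q i = 1) (l : ℕ) :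
    ∑ t : Fin l → β, ∏ j, q (t j) = 1 := by
  rw [← Fintype.sum_pow, hq, one_pow]

lemma Fin.sum_fun_succ_snoc [Fintype β] {R : Type*} [AddCommMonoid R] {l : ℕ}
    (f : (Fin (l + 1) → β) → R) :
    ∑ t, f t = ∑ t : Fin l → β, ∑ i, f (Fin.snoc t i) := by
  rw [← (Fin.snocEquiv fun _ => β).sum_comp, Fintype.sum_prod_type, Finset.sum_comm]
  rfl

lemma sum_prod_mul_foldl_le [Fintype β] (F : α → β → α) (y0 : α) (hq0 : ∀ i, 0 ≤ q i)
    (hq1 : ∑ i, q i = 1) (φ : α → ℝ) {c K : ℝ} (hc0 : 0 ≤ c) (hc1 : c ≤ 1) (hK : 0 ≤ K)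
    (hstep : ∀ a, ∑ i, q i * φ (F a i) ≤ c * φ a + K) (l : ℕ) :
    ∑ t : Fin l → β, (∏ j, q (t j)) * φ (Fin.foldl l (fun a j => F a (t j)) y0)
      ≤ c ^ l * φ y0 + l * K := by
  induction l with
  | zero => simp
  | succ l ih =>
    set w := fun t : Fin l → β => ∏ j, q (t j)
    set Z := fun t : Fin l → β => Fin.foldl l (fun a j => F a (t j)) y0
    have hw : ∀ t, 0 ≤ w t := fun t => Finset.prod_nonneg fun j _ => hq0 _
    calc ∑ t : Fin (l + 1) → β, (∏ j, q (t j)) * φ (Fin.foldl (l + 1) (fun a j => F a (t j)) y0)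
        = ∑ t, w t * ∑ i, q i * φ (F (Z t) i) := by
          rw [Fin.sum_fun_succ_snoc]
          simp only [Fin.foldl_succ_last, Fin.prod_univ_castSucc, Fin.snoc_castSucc,
            Fin.snoc_last, Finset.mul_sum, w, Z]
          simp only [mul_assoc]
      _ ≤ ∑ t, w t * (c * φ (Z t) + K) := by
          gcongr with t
          · exact hw t
          · exact hstep _
      _ = c * ∑ t, w t * φ (Z t) + K := by
          simp only [mul_add, Finset.sum_add_distrib, Finset.mul_sum, ← Finset.sum_mul, w,
            sum_prod_eq_one hq1, one_mul]
          congr 1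
          exact Finset.sum_congr rfl fun t _ => by ring
      _ ≤ c * (c ^ l * φ y0 + l * K) + K := by gcongr
      _ ≤ c ^ (l + 1) * φ y0 + (l + 1 : ℕ) * K := by
          push_cast
          linear_combination mul_nonneg (sub_nonneg.2 hc1) (mul_nonneg (Nat.cast_nonneg l) hK)

lemma eq_foldl_of_succ_eq {F : α → β → α} {M : ℕ} {I : Fin M → β} {y : ℕ → α}
    (hrec : ∀ l (hl : l < M), y (l + 1) = F (y l) (I ⟨l, hl⟩)) :
    y M = Fin.foldl M (fun a j => F a (I j)) (y 0) := by
  suffices ∀ l (hl : l ≤ M), y l = Fin.foldl l (fun a j => F a (I (Fin.castLE hl j))) (y 0) by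
    simpa using this M le_rfl
  intro l hl
  induction l with
  | zero => simp
  | succ l ih =>
    rw [hrec l hl, ih (Nat.le_of_succ_le hl), Fin.foldl_succ_last]
    rfl

lemma lintegral_comp_iIndepFun {Ω ι : Type*} [MeasurableSpace Ω] {P : Measure Ω} [Fintype ι]
    [DecidableEq ι] [Fintype β] [MeasurableSpace β] [MeasurableSingletonClass β] {I : ι → Ω → β}
    (hI : ∀ j, Measurable (I j)) (hindep : iIndepFun I P) (g : (ι → β) → ℝ≥0∞) :
    ∫⁻ ω, g (fun j => I j ω) ∂P = ∑ t, g t * ∏ j, P {ω | I j ω = t j} := by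
  have hIm : Measurable fun ω j => I j ω := measurable_pi_lambda _ hI
  rw [← lintegral_map (measurable_of_countable g) hIm, lintegral_fintype]
  refine Finset.sum_congr rfl fun t _ => ?_
  have hpre : (fun ω j => I j ω) ⁻¹' {t} = ⋂ j ∈ Finset.univ, I j ⁻¹' {t j} := by
    ext ω
    simp [funext_iff]
  rw [Measure.map_apply hIm (measurableSet_singleton t), hpre,
    hindep.measure_inter_preimage_eq_mul _ fun j _ => measurableSet_singleton _]
  rfl

lemma lintegral_ofReal_comp_iIndepFun {Ω ι : Type*} [MeasurableSpace Ω] {P : Measure Ω}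
    [Fintype ι] [DecidableEq ι] [Fintype β] [MeasurableSpace β] [MeasurableSingletonClass β]
    {I : ι → Ω → β} (hI : ∀ j, Measurable (I j)) (hindep : iIndepFun I P) (hq : ∀ i, 0 ≤ q i)
    (hdist : ∀ j i, P {ω | I j ω = i} = ENNReal.ofReal (q i)) (φ : (ι → β) → ℝ)
    (hφ : ∀ t, 0 ≤ φ t) :
    ∫⁻ ω, ENNReal.ofReal (φ fun j => I j ω) ∂P
      = ENNReal.ofReal (∑ t, (∏ j, q (t j)) * φ t) := by
  have hw : ∀ t : ι → β, 0 ≤ ∏ j, q (t j) := fun t => Finset.prod_nonneg fun j _ => hq _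
  rw [lintegral_comp_iIndepFun hI hindep fun t => ENNReal.ofReal (φ t),
    ENNReal.ofReal_sum_of_nonneg fun t _ => mul_nonneg (hw t) (hφ t)]
  refine Finset.sum_congr rfl fun t _ => ?_
  simp only [hdist, ← ENNReal.ofReal_prod_of_nonneg fun j _ => hq _,
    ← ENNReal.ofReal_mul (hφ t), mul_comm]

end Iteration

lemma svrg_rate_nonneg_le_one {γ μ L r : ℝ} {M : ℕ} (hμ : 0 < μ) (hμL : μ ≤ L) (hr : 0 ≤ r)
    (hγ0 : 0 < γ) (hγ : γ < 2 * μ / ((1 + 2 * r + 2 * M * r) * L ^ 2)) :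
    0 ≤ 1 - 2 * γ * μ + (1 + 2 * r) * γ ^ 2 * L ^ 2 ∧
      1 - 2 * γ * μ + (1 + 2 * r) * γ ^ 2 * L ^ 2 ≤ 1 := by
  have hMr : 0 ≤ (M : ℝ) * r := mul_nonneg M.cast_nonneg hr
  have hL2 : μ ^ 2 ≤ L ^ 2 := pow_le_pow_left₀ hμ.le hμL 2
  have hγ' : γ * ((1 + 2 * r + 2 * M * r) * L ^ 2) < 2 * μ :=
    (lt_div_iff₀ (mul_pos (by linarith) (pow_pos (hμ.trans_le hμL) 2))).1 hγ
  constructor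
  · nlinarith [sq_nonneg (1 - γ * μ), mul_nonneg (mul_nonneg hr (sq_nonneg γ)) (sq_nonneg L)]
  · nlinarith [mul_nonneg (mul_nonneg hMr (sq_nonneg γ)) (sq_nonneg L)]

theorem stmt_13_general {n m : ℕ}
    (X : Set (EuclideanSpace ℝ (Fin n)))
    (hXcv : Convex ℝ X)
    (p q : Fin m → ℝ)
    (hp : ∀ i, 0 < p i) (hq : ∀ i, 0 < q i)
    (hps : ∑ i, p i = 1) (hqs : ∑ i, q i = 1)
    (r : ℝ) (hr : r = ∑ i, (p i) ^ 2 / q i)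
    (B : Fin m → EuclideanSpace ℝ (Fin n) → EuclideanSpace ℝ (Fin n))
    (L μ : ℝ) (hμ : 0 < μ) (hμL : μ ≤ L)
    (hLip : ∀ i x y, ‖B i x - B i y‖ ≤ L * ‖x - y‖)
    (A : Fin m → EuclideanSpace ℝ (Fin n) → EuclideanSpace ℝ (Fin n))
    (hA : ∀ i x, A i x = (p i / q i) • B i x)
    (Bbar : EuclideanSpace ℝ (Fin n) → EuclideanSpace ℝ (Fin n))
    (hBbar : ∀ x, Bbar x = ∑ i, p i • B i x)
    (hmono : ∀ x y, μ * ‖x - y‖ ^ 2 ≤ ⟪Bbar x - Bbar y, x - y⟫)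
    (proj : EuclideanSpace ℝ (Fin n) → EuclideanSpace ℝ (Fin n))
    (hproj_mem : ∀ z, proj z ∈ X)
    (hproj_near : ∀ z, ∀ w ∈ X, dist z (proj z) ≤ dist z w)
    (M : ℕ) (hM : 1 ≤ M)
    (γ : ℝ) (hγ0 : 0 < γ)
    (hγ : γ < 2 * μ / ((1 + 2 * r + 2 * M * r) * L ^ 2))
    (xstar : EuclideanSpace ℝ (Fin n))
    (hfix : xstar = proj (xstar - γ • Bbar xstar))
    {Ω : Type*} [MeasurableSpace Ω] (P : Measure Ω)
    (I : Fin M → Ω → Fin m) (hImeas : ∀ l, Measurable (I l))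
    (hIindep : iIndepFun I P)
    (hIdist : ∀ l i, P {ω | I l ω = i} = ENNReal.ofReal (q i))
    (y0 : EuclideanSpace ℝ (Fin n))
    (ytil : ℕ → Ω → EuclideanSpace ℝ (Fin n))
    (hytil0 : ∀ ω, ytil 0 ω = y0)
    (hytilrec : ∀ l : ℕ, ∀ hl : l < M, ∀ ω,
      ytil (l + 1) ω
        = proj (ytil l ω
            - γ • (A (I ⟨l, hl⟩ ω) (ytil l ω) - A (I ⟨l, hl⟩ ω) y0 + Bbar y0))) :
    ∫⁻ ω, ENNReal.ofReal (‖ytil M ω - xstar‖ ^ 2) ∂P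
      ≤ ENNReal.ofReal
          ((1 - 2 * γ * μ + (1 + 2 * r + 2 * M * r) * γ ^ 2 * L ^ 2)
            * ‖y0 - xstar‖ ^ 2) := by
  have hr0 : 0 ≤ r := hr ▸ Finset.sum_nonneg fun i _ => div_nonneg (sq_nonneg _) (hq i).le
  set D := ‖y0 - xstar‖ ^ 2
  set c := 1 - 2 * γ * μ + (1 + 2 * r) * γ ^ 2 * L ^ 2
  set K := 2 * r * γ ^ 2 * L ^ 2 * D
  obtain ⟨hc0, hc1⟩ := svrg_rate_nonneg_le_one hμ hμL hr0 hγ0 hγ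
  set F := fun y i => proj (y - γ • (A i y - A i y0 + Bbar y0))
  have hstep (y) : ∑ i, q i * ‖F y i - xstar‖ ^ 2 ≤ c * ‖y - xstar‖ ^ 2 + K := by
    simpa only [← hr] using svrg_importance_step_bound
      (norm_proj_sub_proj_le hXcv hproj_mem hproj_near) (fun i => (hp i).le) hq hps hqs hLip hA
      hBbar hmono hγ0.le hfix y y0
  have hytil ω : ytil M ω = Fin.foldl M (fun a j => F a (I j ω)) y0 :=
    hytil0 ω ▸ eq_foldl_of_succ_eq (y := (ytil · ω)) (F := F) fun l hl => hytilrec l hl ω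
  have hsum := sum_prod_mul_foldl_le F y0 (fun i => (hq i).le) hqs (‖· - xstar‖ ^ 2) hc0 hc1
    (by positivity) hstep M
  simp only [hytil]
  rw [lintegral_ofReal_comp_iIndepFun hImeas hIindep (fun i => (hq i).le) hIdist
    (fun t => ‖Fin.foldl M (fun a j => F a (t j)) y0 - xstar‖ ^ 2) fun _ => sq_nonneg _]
  refine ENNReal.ofReal_le_ofReal (hsum.trans ?_)
  calc c ^ M * D + M * K ≤ c * D + M * K := by gcongr; exact pow_le_of_le_one hc0 hc1 (by omega)
    _ = _ := by ring

theorem stmt_13 {n m : ℕ} (hm : 0 < m)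
    (X : Set (EuclideanSpace ℝ (Fin n)))
    (hXne : X.Nonempty) (hXcl : IsClosed X) (hXcv : Convex ℝ X)
    (p q : Fin m → ℝ)
    (hp : ∀ i, 0 < p i) (hq : ∀ i, 0 < q i)
    (hps : ∑ i, p i = 1) (hqs : ∑ i, q i = 1)
    (r : ℝ) (hr : r = ∑ i, (p i) ^ 2 / q i)
    (B : Fin m → EuclideanSpace ℝ (Fin n) → EuclideanSpace ℝ (Fin n))
    (L μ : ℝ) (hμ : 0 < μ) (hμL : μ ≤ L)
    (hLip : ∀ i x y, ‖B i x - B i y‖ ≤ L * ‖x - y‖)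
    (A : Fin m → EuclideanSpace ℝ (Fin n) → EuclideanSpace ℝ (Fin n))
    (hA : ∀ i x, A i x = (p i / q i) • B i x)
    (Bbar : EuclideanSpace ℝ (Fin n) → EuclideanSpace ℝ (Fin n))
    (hBbar : ∀ x, Bbar x = ∑ i, p i • B i x)
    (hmono : ∀ x y, μ * ‖x - y‖ ^ 2 ≤ ⟪Bbar x - Bbar y, x - y⟫)
    (proj : EuclideanSpace ℝ (Fin n) → EuclideanSpace ℝ (Fin n))
    (hproj_mem : ∀ z, proj z ∈ X)
    (hproj_near : ∀ z, ∀ w ∈ X, dist z (proj z) ≤ dist z w)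
    (M : ℕ) (hM : 1 ≤ M)
    (γ : ℝ) (hγ0 : 0 < γ)
    (hγ : γ < 2 * μ / ((1 + 2 * r + 2 * M * r) * L ^ 2))
    (xstar : EuclideanSpace ℝ (Fin n))
    (hfix : xstar = proj (xstar - γ • Bbar xstar))
    {Ω : Type*} [MeasurableSpace Ω] (P : Measure Ω) [IsProbabilityMeasure P]
    (I : Fin M → Ω → Fin m) (hImeas : ∀ l, Measurable (I l))
    (hIindep : iIndepFun I P)
    (hIdist : ∀ l i, P {ω | I l ω = i} = ENNReal.ofReal (q i))
    (y0 : EuclideanSpace ℝ (Fin n)) (hy0X : y0 ∈ X)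
    (ytil : ℕ → Ω → EuclideanSpace ℝ (Fin n))
    (hytil0 : ∀ ω, ytil 0 ω = y0)
    (hytilrec : ∀ l : ℕ, ∀ hl : l < M, ∀ ω,
      ytil (l + 1) ω
        = proj (ytil l ω
            - γ • (A (I ⟨l, hl⟩ ω) (ytil l ω) - A (I ⟨l, hl⟩ ω) y0 + Bbar y0))) :
    ∫⁻ ω, ENNReal.ofReal (‖ytil M ω - xstar‖ ^ 2) ∂P
      ≤ ENNReal.ofReal
          ((1 - 2 * γ * μ + (1 + 2 * r + 2 * M * r) * γ ^ 2 * L ^ 2)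
            * ‖y0 - xstar‖ ^ 2) :=
  stmt_13_general X hXcv p q hp hq hps hqs r hr B L μ hμ hμL hLip A hA Bbar hBbar hmono proj
    hproj_mem hproj_near M hM γ hγ0 hγ xstar hfix P I hImeas hIindep hIdist y0 ytil hytil0 hytilrec
end
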